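/- For pure imaginary quaternions M and N with ⟨M, N⟩ = Re(M N*) = 0, M ≠ 0, N ≠ 0, the commutator [exp M, exp N] = 0 if and only if sin |M| = 0 or sin |N| = 0 or M * N = 0. -/

import Mathlib

/-!
For pure imaginary `q`, `exp q = cos ‖q‖ + (sin ‖q‖ / ‖q‖) • q`. The scalar parts commute, so
`[exp M, exp N] = (sin ‖M‖ / ‖M‖) (sin ‖N‖ / ‖N‖) • [M, N]`, and orthogonal pure quaternions
anticommute, so `[M, N] = 2 M N`.
-/

open Quaternion NormedSpace

theorem Real.sin_div_self_eq_zero_iff (x : ℝ) : Real.sin x / x = 0 ↔ Real.sin x = 0 := by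
  rw [div_eq_zero_iff, or_iff_left_of_imp]
  rintro rfl
  exact Real.sin_zero

theorem commutator_algebraMap_add_smul {R A : Type*} [CommRing R] [Ring A] [Algebra R A]
    (c d a b : R) (x y : A) :
    (algebraMap R A c + a • x) * (algebraMap R A d + b • y) -
        (algebraMap R A d + b • y) * (algebraMap R A c + a • x) = (a * b) • (x * y - y * x) := by
  simp only [Algebra.algebraMap_eq_smul_one, add_mul, mul_add, smul_mul_assoc, mul_smul_comm,
    one_mul, mul_one]
  module

theorem Quaternion.mul_swap_eq_neg_mul_of_re_mul_star_eq_zero {R : Type*} [CommRing R]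
    {x y : ℍ[R]} (hx : x.re = 0) (hy : y.re = 0) (hxy : (x * star y).re = 0) :
    y * x = -(x * y) := by
  simp only [re_mul, re_star, imI_star, imJ_star, imK_star, hx, hy] at hxy
  ext <;> simp only [re_mul, imI_mul, imJ_mul, imK_mul, re_neg, imI_neg, imJ_neg, imK_neg, hx, hy]
  · linear_combination (-2) * hxy
  all_goals ring

theorem commutator_exp_eq_zero_iff_general (M N : ℍ[ℝ])
    (hM : M.re = 0) (hN : N.re = 0) (horth : (M * star N).re = 0) :
    exp M * exp N - exp N * exp M = 0 ↔
      Real.sin ‖M‖ = 0 ∨ Real.sin ‖N‖ = 0 ∨ M * N = 0 := by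
  rw [exp_of_re_eq_zero M hM, exp_of_re_eq_zero N hN, ← algebraMap_def,
    commutator_algebraMap_add_smul, mul_swap_eq_neg_mul_of_re_mul_star_eq_zero hM hN horth,
    sub_neg_eq_add, ← two_smul ℝ, smul_smul, smul_eq_zero, mul_eq_zero, mul_eq_zero,
    Real.sin_div_self_eq_zero_iff, Real.sin_div_self_eq_zero_iff]
  simp only [two_ne_zero, false_or, or_assoc]

theorem commutator_exp_eq_zero_iff (M N : ℍ[ℝ])
    (hM : M.re = 0) (hN : N.re = 0) (horth : (M * star N).re = 0)
    (hM0 : M ≠ 0) (hN0 : N ≠ 0) :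
    exp M * exp N - exp N * exp M = 0 ↔
      Real.sin ‖M‖ = 0 ∨ Real.sin ‖N‖ = 0 ∨ M * N = 0 :=
  commutator_exp_eq_zero_iff_general M N hM hN horth
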